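/- (Lemma 3.7, identity (3.16).) Suppose τ : (ℕ → ℂ) → ℂ is continuous and satisfies the KP Fay identity. Then for all x : ℕ → ℂ and all pairwise distinct nonzero s₁, s₂, s₃ ∈ ℂ: τ(x + [s₁] − [s₂] − [s₃]) · τ(x) = ( s₂(s₃ − s₁) / (s₁(s₃ − s₂)) ) · τ(x + [s₁] − [s₂]) · τ(x − [s₃]) + ( s₃(s₂ − s₁) / (s₁(s₂ − s₃)) ) · τ(x + [s₁] − [s₃]) · τ(x − [s₂]). (In the paper this is stated for τ₁(·, t₂) with the second block of time variables frozen.) -/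

import Mathlib

/-- The shift `[s] : ℕ → ℂ`, `[s](k) = s^(k+1)/(k+1)`, representing the
sequence `(s, s²/2, s³/3, …)` of time variables. -/
noncomputable def sh (s : ℂ) : ℕ → ℂ := fun k => s ^ (k + 1) / ((k : ℂ) + 1)

/-- The Fay identity of the KP hierarchy for a tau function `τ`. -/
def KPFay (τ : (ℕ → ℂ) → ℂ) : Prop :=
  ∀ x : ℕ → ℂ, ∀ s0 s1 s2 s3 : ℂ,
    s0 ≠ 0 → s1 ≠ 0 → s2 ≠ 0 → s3 ≠ 0 →
    s0 ≠ s1 → s0 ≠ s2 → s0 ≠ s3 → s1 ≠ s2 → s1 ≠ s3 → s2 ≠ s3 →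
    (s0 - s1) * (s2 - s3) * τ (x + sh s0 + sh s1) * τ (x + sh s2 + sh s3)
      + (s0 - s2) * (s3 - s1) * τ (x + sh s0 + sh s2) * τ (x + sh s3 + sh s1)
      + (s0 - s3) * (s1 - s2) * τ (x + sh s0 + sh s3) * τ (x + sh s1 + sh s2)
      = 0

lemma sh_zero : sh 0 = 0 := by
  funext k
  simp [sh]

lemma continuous_sh : Continuous sh := by
  apply continuous_pi
  intro k
  exact (continuous_pow (k + 1)).div_const _

/-- Lemma 3.7, identity (3.16). -/
theorem fay_identity_316 (τ : (ℕ → ℂ) → ℂ) (hc : Continuous τ)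
    (hFay : KPFay τ) :
    ∀ x : ℕ → ℂ, ∀ s1 s2 s3 : ℂ,
      s1 ≠ 0 → s2 ≠ 0 → s3 ≠ 0 → s1 ≠ s2 → s1 ≠ s3 → s2 ≠ s3 →
      τ (x + sh s1 - sh s2 - sh s3) * τ x
        = (s2 * (s3 - s1) / (s1 * (s3 - s2))) * τ (x + sh s1 - sh s2) * τ (x - sh s3)
          + (s3 * (s2 - s1) / (s1 * (s2 - s3))) * τ (x + sh s1 - sh s3) * τ (x - sh s2) := by
  intro x s1 s2 s3 h1 h2 h3 h12 h13 h23
  set y : ℕ → ℂ := x - sh s2 - sh s3 with hy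
  set F : ℂ → ℂ := fun ε =>
    (ε - s1) * (s2 - s3) * τ (y + sh ε + sh s1) * τ (y + sh s2 + sh s3)
      + (ε - s2) * (s3 - s1) * τ (y + sh ε + sh s2) * τ (y + sh s3 + sh s1)
      + (ε - s3) * (s1 - s2) * τ (y + sh ε + sh s3) * τ (y + sh s1 + sh s2) with hF
  have hFcont : Continuous F := by
    apply Continuous.add
    apply Continuous.add
    all_goals
      exact ((((continuous_id.sub continuous_const).mul continuous_const).mul
        (hc.comp ((continuous_const.add continuous_sh).add continuous_const))).mul
        continuous_const)
  have hF0 : F 0 = 0 := by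
    have hne : ∀ᶠ ε in nhdsWithin (0 : ℂ) {0}ᶜ, F ε = 0 := by
      have e1 : ∀ᶠ ε in nhdsWithin (0 : ℂ) {0}ᶜ, ε ≠ s1 :=
        eventually_nhdsWithin_of_eventually_nhds (eventually_ne_nhds (Ne.symm h1))
      have e2 : ∀ᶠ ε in nhdsWithin (0 : ℂ) {0}ᶜ, ε ≠ s2 :=
        eventually_nhdsWithin_of_eventually_nhds (eventually_ne_nhds (Ne.symm h2))
      have e3 : ∀ᶠ ε in nhdsWithin (0 : ℂ) {0}ᶜ, ε ≠ s3 :=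
        eventually_nhdsWithin_of_eventually_nhds (eventually_ne_nhds (Ne.symm h3))
      have e0 : ∀ᶠ ε in nhdsWithin (0 : ℂ) {0}ᶜ, ε ≠ 0 :=
        eventually_mem_nhdsWithin
      filter_upwards [e0, e1, e2, e3] with ε he0 he1 he2 he3
      exact hFay y ε s1 s2 s3 he0 h1 h2 h3 he1 he2 he3 h12 h13 h23
    have ht : Filter.Tendsto F (nhdsWithin (0 : ℂ) {0}ᶜ) (nhds (F 0)) :=
      (hFcont.tendsto 0).mono_left nhdsWithin_le_nhds
    have hne' : (fun _ => (0 : ℂ)) =ᶠ[nhdsWithin (0 : ℂ) {0}ᶜ] F :=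
      hne.mono fun ε h => h.symm
    have ht0 : Filter.Tendsto F (nhdsWithin (0 : ℂ) {0}ᶜ) (nhds 0) :=
      tendsto_const_nhds.congr' hne'
    exact tendsto_nhds_unique ht ht0
  have key := hF0
  rw [hF] at key
  simp only [sh_zero, add_zero] at key
  have a1 : y + sh s1 = x + sh s1 - sh s2 - sh s3 := by
    rw [hy]; abel
  have a2 : y + sh s2 + sh s3 = x := by rw [hy]; abel
  have a3 : y + sh s2 = x - sh s3 := by rw [hy]; abel
  have a4 : y + sh s3 + sh s1 = x + sh s1 - sh s2 := by rw [hy]; abel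
  have a5 : y + sh s3 = x - sh s2 := by rw [hy]; abel
  have a6 : y + sh s1 + sh s2 = x + sh s1 - sh s3 := by rw [hy]; abel
  rw [a2, a4, a6, a1, a3, a5] at key
  have h23' : s3 - s2 ≠ 0 := sub_ne_zero.mpr (Ne.symm h23)
  have h32' : s2 - s3 ≠ 0 := sub_ne_zero.mpr h23
  have h31' : s3 - s1 ≠ 0 := sub_ne_zero.mpr (Ne.symm h13)
  have h21' : s2 - s1 ≠ 0 := sub_ne_zero.mpr (Ne.symm h12)
  field_simp
  linear_combination (s2 - s3) * key
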